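/- arXiv:2409.08490 — 2 statements merged into one kernel-verified Lean document; each statement's English description precedes it below -/
import Mathlib

section
/- Let a₀^i, a₁^i ∈ ℝ³ be unit vectors for i = 1,...,n, and define v₀ = Σ_{x∈{0,1}^n} (−1)^⌊w(x)/2⌋ ⊗_{i=1}^n a_{x_i}^i and v₁ = Σ_{x∈{0,1}^n} (−1)^⌈w(x)/2⌉ ⊗_{i=1}^n a_{x_i}^i, as vectors in ℝ^{3^n} (Kronecker/tensor products of the 3-dimensional vectors). Then ‖v₀‖² + ‖v₁‖² = 2^{n+1} when n is odd. -/
open scoped RealInnerProductSpace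

/-- Hamming weight of a bit string. -/
def hammingWeight {n : ℕ} (x : Fin n → Bool) : ℕ :=
  (Finset.univ.filter fun i => x i = true).card

/-- Kronecker (tensor) product of `n` vectors in `ℝ³`, realized as a vector in
`ℝ^{3^n}` indexed by `Fin n → Fin 3`. -/
noncomputable def tensorVec {n : ℕ} (a : Fin n → EuclideanSpace ℝ (Fin 3)) :
    EuclideanSpace ℝ (Fin n → Fin 3) :=
  WithLp.toLp 2 (fun f => ∏ i, a i (f i))

private lemma coeff_eq (w v : ℕ) :
    (-1:ℝ)^(w/2) * (-1:ℝ)^(v/2) + (-1:ℝ)^((w+1)/2) * (-1:ℝ)^((v+1)/2)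
      = 2 * ((Complex.I ^ w) * (starRingEnd ℂ) (Complex.I ^ v)).re := by
  obtain ⟨q, r, hr, rfl⟩ : ∃ q r, r < 4 ∧ w = 4*q + r :=
    ⟨w/4, w%4, Nat.mod_lt _ (by norm_num), by omega⟩
  obtain ⟨p, s, hs, rfl⟩ : ∃ p s, s < 4 ∧ v = 4*p + s :=
    ⟨v/4, v%4, Nat.mod_lt _ (by norm_num), by omega⟩
  have h1 : ∀ q r : ℕ, (-1:ℝ)^((4*q+r)/2) = (-1)^(r/2) := by
    intro q r
    have h : (4*q+r)/2 = 2*q + r/2 := by omega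
    rw [h, pow_add, pow_mul]
    norm_num
  have h2 : ∀ q r : ℕ, Complex.I^(4*q+r) = Complex.I^r := by
    intro q r
    rw [pow_add, pow_mul, Complex.I_pow_four, one_pow, one_mul]
  have h3 : (4*q+r+1) = 4*q + (r+1) := by ring
  have h4 : (4*p+s+1) = 4*p + (s+1) := by ring
  rw [h3, h4, h1, h1, h1, h1, h2, h2]
  interval_cases r <;> interval_cases s <;>
    norm_num [pow_succ, Complex.mul_re, Complex.mul_im]

private lemma key (n : ℕ) (c : Fin n → ℝ) :
    ∑ x : Fin n → Bool, ∑ y : Fin n → Bool,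
      (((-1:ℝ)^(hammingWeight x/2) * (-1:ℝ)^(hammingWeight y/2)
        + (-1:ℝ)^((hammingWeight x+1)/2) * (-1:ℝ)^((hammingWeight y+1)/2))
        * ∏ i, (if x i = y i then (1:ℝ) else c i)) = 2^(n+1) := by
  have hF : ∀ x : Fin n → Bool,
      (∏ i, (if x i then Complex.I else 1)) = Complex.I ^ hammingWeight x := by
    intro x
    rw [hammingWeight, Finset.prod_ite, Finset.prod_const, Finset.prod_const, one_pow, mul_one]
  set g : Fin n → Bool → Bool → ℂ := fun i b b' =>
    (if b then Complex.I else 1) * (starRingEnd ℂ) (if b' then Complex.I else 1)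
      * (if b = b' then 1 else (c i : ℂ)) with hg
  have hpoint : ∀ x y : Fin n → Bool,
      (((-1:ℝ)^(hammingWeight x/2) * (-1:ℝ)^(hammingWeight y/2)
        + (-1:ℝ)^((hammingWeight x+1)/2) * (-1:ℝ)^((hammingWeight y+1)/2))
        * ∏ i, (if x i = y i then (1:ℝ) else c i))
      = 2 * (∏ i, g i (x i) (y i)).re := by
    intro x y
    have hprod : ∏ i, g i (x i) (y i)
        = (Complex.I ^ hammingWeight x) * (starRingEnd ℂ) (Complex.I ^ hammingWeight y)
          * ((∏ i, (if x i = y i then (1:ℝ) else c i) : ℝ) : ℂ) := by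
      rw [← hF x, ← hF y, map_prod, Complex.ofReal_prod, ← Finset.prod_mul_distrib,
        ← Finset.prod_mul_distrib]
      refine Finset.prod_congr rfl fun i _ => ?_
      by_cases h : x i = y i <;> simp [hg, h]
    have hre : ∀ (z : ℂ) (p : ℝ), (z * (p:ℂ)).re = z.re * p := fun z p => by
      simp [Complex.mul_re]
    rw [coeff_eq, hprod, hre]
    ring
  calc ∑ x : Fin n → Bool, ∑ y : Fin n → Bool,
      (((-1:ℝ)^(hammingWeight x/2) * (-1:ℝ)^(hammingWeight y/2)
        + (-1:ℝ)^((hammingWeight x+1)/2) * (-1:ℝ)^((hammingWeight y+1)/2))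
        * ∏ i, (if x i = y i then (1:ℝ) else c i))
      = 2 * (∑ x : Fin n → Bool, ∑ y : Fin n → Bool, ∏ i, g i (x i) (y i)).re := by
        simp only [hpoint, Complex.re_sum, Finset.mul_sum]
    _ = 2 * ((2:ℂ)^n).re := by
        congr 2
        have hy : ∀ x : Fin n → Bool, ∑ y : Fin n → Bool, ∏ i, g i (x i) (y i)
            = ∏ i, (∑ b : Bool, g i (x i) b) := by
          intro x
          rw [Finset.prod_univ_sum (fun _ => (Finset.univ : Finset Bool))
            (fun i b => g i (x i) b), Fintype.piFinset_univ]
        simp only [hy]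
        rw [← Fintype.piFinset_univ, ← Finset.prod_univ_sum (fun _ => (Finset.univ : Finset Bool))
          (fun i b' => ∑ b : Bool, g i b' b)]
        have hfac : ∀ i : Fin n, (∑ b' : Bool, ∑ b : Bool, g i b' b) = 2 := by
          intro i
          rw [Fintype.sum_bool, Fintype.sum_bool, Fintype.sum_bool]
          simp only [hg, if_true, if_false, reduceIte, Complex.conj_I, map_one]
          ring_nf
          simp [Complex.I_sq]
          ring
        rw [Finset.prod_congr rfl (fun i _ => hfac i), Finset.prod_const, Finset.card_univ,
          Fintype.card_fin]
    _ = 2^(n+1) := by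
        rw [show ((2:ℂ)^n) = (((2:ℝ)^n : ℝ) : ℂ) by push_cast; ring, Complex.ofReal_re]
        ring

/-- Property 1: for odd `n` and unit vectors `a₀^i, a₁^i ∈ ℝ³`, the vectors
`v₀ = Σ_x (−1)^⌊w(x)/2⌋ ⊗ᵢ a_{xᵢ}^i` and `v₁ = Σ_x (−1)^⌈w(x)/2⌉ ⊗ᵢ a_{xᵢ}^i`
satisfy `‖v₀‖² + ‖v₁‖² = 2^{n+1}`. -/
theorem norm_sq_v0_add_v1 (n : ℕ) (hn : Odd n)
    (a0 a1 : Fin n → EuclideanSpace ℝ (Fin 3))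
    (ha0 : ∀ i, ‖a0 i‖ = 1) (ha1 : ∀ i, ‖a1 i‖ = 1) :
    ‖∑ x : Fin n → Bool, ((-1 : ℝ) ^ (hammingWeight x / 2)) •
        tensorVec (fun i => if x i then a1 i else a0 i)‖ ^ 2 +
      ‖∑ x : Fin n → Bool, ((-1 : ℝ) ^ ((hammingWeight x + 1) / 2)) •
        tensorVec (fun i => if x i then a1 i else a0 i)‖ ^ 2 = 2 ^ (n + 1) := by
  set c0 : Fin n → ℝ := fun i => ∑ j : Fin 3, a0 i j * a1 i j with hc0
  have hunit : ∀ a : EuclideanSpace ℝ (Fin 3), ‖a‖ = 1 → ∑ j, a j * a j = 1 := by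
    intro a ha
    have h : Real.sqrt (∑ j, ‖a j‖^2) = 1 := by rw [← EuclideanSpace.norm_eq, ha]
    rw [Real.sqrt_eq_one] at h
    simpa [Real.norm_eq_abs, sq_abs, sq] using h
  have hdot : ∀ (x y : Fin n → Bool) (i : Fin n),
      (∑ j : Fin 3, (if x i then a1 i else a0 i) j * (if y i then a1 i else a0 i) j)
        = if x i = y i then (1:ℝ) else c0 i := by
    intro x y i
    cases hx : x i <;> cases hy : y i <;>
      simp only [hx, hy, if_true, if_false, reduceIte, hc0]
    · exact hunit _ (ha0 i)
    · simp
    · simp [mul_comm]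
    · exact hunit _ (ha1 i)
  have happly : ∀ (c : (Fin n → Bool) → ℝ) (f : Fin n → Fin 3),
      (∑ x : Fin n → Bool, c x • tensorVec (fun i => if x i then a1 i else a0 i)) f
        = ∑ x : Fin n → Bool, c x * ∏ i, (if x i then a1 i else a0 i) (f i) := by
    intro c f
    rw [show (∑ x : Fin n → Bool, c x • tensorVec (fun i => if x i then a1 i else a0 i)) f
      = ∑ x : Fin n → Bool, (c x • tensorVec (fun i => if x i then a1 i else a0 i)) f
      from by rw [WithLp.ofLp_sum, Finset.sum_apply]]
    rfl
  have hnorm : ∀ c : (Fin n → Bool) → ℝ,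
      ‖∑ x : Fin n → Bool, c x • tensorVec (fun i => if x i then a1 i else a0 i)‖^2
      = ∑ x : Fin n → Bool, ∑ y : Fin n → Bool,
          (c x * c y) * ∏ i, (if x i = y i then (1:ℝ) else c0 i) := by
    intro c
    rw [EuclideanSpace.norm_eq, Real.sq_sqrt (by positivity)]
    calc ∑ f : Fin n → Fin 3,
        ‖(∑ x : Fin n → Bool, c x • tensorVec (fun i => if x i then a1 i else a0 i)) f‖^2
        = ∑ f : Fin n → Fin 3,
            (∑ x : Fin n → Bool, c x * ∏ i, (if x i then a1 i else a0 i) (f i))^2 := by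
          refine Finset.sum_congr rfl fun f _ => ?_
          rw [Real.norm_eq_abs, sq_abs, happly]
      _ = ∑ f : Fin n → Fin 3, ∑ x : Fin n → Bool, ∑ y : Fin n → Bool,
            (c x * ∏ i, (if x i then a1 i else a0 i) (f i))
              * (c y * ∏ i, (if y i then a1 i else a0 i) (f i)) := by
          refine Finset.sum_congr rfl fun f _ => ?_
          rw [sq, Finset.sum_mul_sum]
      _ = ∑ x : Fin n → Bool, ∑ y : Fin n → Bool, ∑ f : Fin n → Fin 3,
            (c x * ∏ i, (if x i then a1 i else a0 i) (f i))
              * (c y * ∏ i, (if y i then a1 i else a0 i) (f i)) := by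
          rw [Finset.sum_comm]
          exact Finset.sum_congr rfl fun x _ => Finset.sum_comm
      _ = ∑ x : Fin n → Bool, ∑ y : Fin n → Bool, (c x * c y) * ∑ f : Fin n → Fin 3,
            ∏ i, ((if x i then a1 i else a0 i) (f i) * (if y i then a1 i else a0 i) (f i)) := by
          refine Finset.sum_congr rfl fun x _ => Finset.sum_congr rfl fun y _ => ?_
          rw [Finset.mul_sum]
          refine Finset.sum_congr rfl fun f _ => ?_
          rw [Finset.prod_mul_distrib]
          ring
      _ = ∑ x : Fin n → Bool, ∑ y : Fin n → Bool, (c x * c y)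
            * ∏ i, (∑ j : Fin 3, (if x i then a1 i else a0 i) j * (if y i then a1 i else a0 i) j) := by
          refine Finset.sum_congr rfl fun x _ => Finset.sum_congr rfl fun y _ => ?_
          congr 1
          rw [Finset.prod_univ_sum (fun _ => (Finset.univ : Finset (Fin 3)))
            (fun i j => (if x i then a1 i else a0 i) j * (if y i then a1 i else a0 i) j),
            Fintype.piFinset_univ]
      _ = ∑ x : Fin n → Bool, ∑ y : Fin n → Bool,
            (c x * c y) * ∏ i, (if x i = y i then (1:ℝ) else c0 i) := by
          refine Finset.sum_congr rfl fun x _ => Finset.sum_congr rfl fun y _ => ?_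
          congr 1
          exact Finset.prod_congr rfl fun i _ => hdot x y i
  rw [hnorm, hnorm, ← Finset.sum_add_distrib]
  rw [show (2:ℝ)^(n+1) = ∑ x : Fin n → Bool, ∑ y : Fin n → Bool,
      (((-1:ℝ)^(hammingWeight x/2) * (-1:ℝ)^(hammingWeight y/2)
        + (-1:ℝ)^((hammingWeight x+1)/2) * (-1:ℝ)^((hammingWeight y+1)/2))
        * ∏ i, (if x i = y i then (1:ℝ) else c0 i)) from (key n c0).symm]
  refine Finset.sum_congr rfl fun x _ => ?_
  rw [← Finset.sum_add_distrib]
  refine Finset.sum_congr rfl fun y _ => ?_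
  ring
end

section
/- Let a₀^i, a₁^i ∈ ℝ³ be unit vectors for i = 1,...,n, and define v₀ = Σ_{x∈{0,1}^n} (−1)^⌊w(x)/2⌋ ⊗_{i=1}^n a_{x_i}^i and v₁ = Σ_{x∈{0,1}^n} (−1)^⌈w(x)/2⌉ ⊗_{i=1}^n a_{x_i}^i in ℝ^{3^n}. Then v₀ · v₁ = 0 when n is odd. -/
open scoped RealInnerProductSpace

lemma hammingWeight_le {n : ℕ} (x : Fin n → Bool) : hammingWeight x ≤ n := by
  simpa [hammingWeight] using Finset.card_filter_le Finset.univ (fun i => x i = true)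

lemma hammingWeight_not {n : ℕ} (x : Fin n → Bool) :
    hammingWeight (fun i => ! x i) = n - hammingWeight x := by
  unfold hammingWeight
  have h : (Finset.univ.filter fun i => (! x i) = true)
      = (Finset.univ.filter fun i => x i = true)ᶜ := by
    ext i; simp
  rw [h, Finset.card_compl]
  simp

lemma inner_tensorVec {n : ℕ} (u v : Fin n → EuclideanSpace ℝ (Fin 3)) :
    ⟪tensorVec u, tensorVec v⟫ = ∏ i, ⟪u i, v i⟫ := by
  simp only [tensorVec, PiLp.inner_apply, PiLp.toLp_apply, RCLike.inner_apply, conj_trivial]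
  symm
  rw [Finset.prod_univ_sum, Fintype.piFinset_univ]
  refine Finset.sum_congr rfl fun f _ => ?_
  rw [Finset.prod_mul_distrib]

lemma sign_cancel {n a b : ℕ} (hn : Odd n) (ha : a ≤ n) (hb : b ≤ n) :
    ((-1 : ℝ) ^ ((n - a) / 2) * (-1) ^ ((n - b + 1) / 2))
      = -(((-1 : ℝ) ^ (a / 2)) * (-1) ^ ((b + 1) / 2)) := by
  obtain ⟨m, hm⟩ := hn
  rw [← pow_add, ← pow_add]
  rcases Nat.even_or_odd (a / 2 + (b + 1) / 2) with h | h
  · have h' : Odd ((n - a) / 2 + (n - b + 1) / 2) := by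
      rw [Nat.even_iff] at h; rw [Nat.odd_iff]; omega
    simp [h.neg_one_pow, h'.neg_one_pow]
  · have h' : Even ((n - a) / 2 + (n - b + 1) / 2) := by
      rw [Nat.odd_iff] at h; rw [Nat.even_iff]; omega
    simp [h.neg_one_pow, h'.neg_one_pow]

/-- Property 3: for odd `n` and unit vectors `a₀^i, a₁^i ∈ ℝ³`, the vectors
`v₀ = Σ_x (−1)^⌊w(x)/2⌋ ⊗ᵢ a_{xᵢ}^i` and `v₁ = Σ_x (−1)^⌈w(x)/2⌉ ⊗ᵢ a_{xᵢ}^i`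
are orthogonal: `v₀ · v₁ = 0`. -/
theorem v0_inner_v1_eq_zero (n : ℕ) (hn : Odd n)
    (a0 a1 : Fin n → EuclideanSpace ℝ (Fin 3))
    (ha0 : ∀ i, ‖a0 i‖ = 1) (ha1 : ∀ i, ‖a1 i‖ = 1) :
    ⟪∑ x : Fin n → Bool, ((-1 : ℝ) ^ (hammingWeight x / 2)) •
        tensorVec (fun i => if x i then a1 i else a0 i),
      ∑ x : Fin n → Bool, ((-1 : ℝ) ^ ((hammingWeight x + 1) / 2)) •
        tensorVec (fun i => if x i then a1 i else a0 i)⟫ = 0 := by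
  classical
  set T : (Fin n → Bool) → EuclideanSpace ℝ (Fin n → Fin 3) :=
    fun x => tensorVec (fun i => if x i then a1 i else a0 i) with hT
  set F : (Fin n → Bool) → (Fin n → Bool) → ℝ :=
    fun x y => ((-1 : ℝ) ^ (hammingWeight x / 2)) *
      (((-1 : ℝ) ^ ((hammingWeight y + 1) / 2)) * ⟪T x, T y⟫) with hF
  have expand : ⟪∑ x : Fin n → Bool, ((-1 : ℝ) ^ (hammingWeight x / 2)) • T x,
      ∑ y : Fin n → Bool, ((-1 : ℝ) ^ ((hammingWeight y + 1) / 2)) • T y⟫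
      = ∑ x : Fin n → Bool, ∑ y : Fin n → Bool, F x y := by
    rw [sum_inner]
    refine Finset.sum_congr rfl fun x _ => ?_
    rw [inner_sum]
    simp only [real_inner_smul_left, real_inner_smul_right, hF, Finset.mul_sum]
    exact Finset.sum_congr rfl fun y _ => by ring
  rw [expand]
  -- term-wise inner products of tensors
  have hTT : ∀ x y : Fin n → Bool, ⟪T (fun i => ! x i), T (fun i => ! y i)⟫ = ⟪T x, T y⟫ := by
    intro x y
    rw [hT]
    simp only
    rw [inner_tensorVec, inner_tensorVec]
    refine Finset.prod_congr rfl fun i _ => ?_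
    have h0 : ⟪a0 i, a0 i⟫ = 1 := by
      rw [real_inner_self_eq_norm_sq, ha0 i]; norm_num
    have h1 : ⟪a1 i, a1 i⟫ = 1 := by
      rw [real_inner_self_eq_norm_sq, ha1 i]; norm_num
    rcases Bool.eq_false_or_eq_true (x i) with hx | hx <;>
      rcases Bool.eq_false_or_eq_true (y i) with hy | hy <;>
      simp [hx, hy, h0, h1, ha0, ha1, real_inner_comm (a0 i) (a1 i)]
  have key : ∀ x y : Fin n → Bool, F (fun i => ! x i) (fun i => ! y i) = - F x y := by
    intro x y
    rw [hF]
    simp only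
    rw [hTT, hammingWeight_not, hammingWeight_not]
    have := sign_cancel (a := hammingWeight x) (b := hammingWeight y) hn
      (hammingWeight_le x) (hammingWeight_le y)
    linear_combination (⟪T x, T y⟫ : ℝ) * this
  -- sum over pairs cancels via the complement involution
  set en : (Fin n → Bool) ≃ (Fin n → Bool) :=
    ⟨fun x i => ! x i, fun x i => ! x i,
      fun x => by funext i; simp, fun x => by funext i; simp⟩ with hen
  set e : ((Fin n → Bool) × (Fin n → Bool)) ≃ ((Fin n → Bool) × (Fin n → Bool)) :=
    en.prodCongr en with he
  have hsum : ∑ x : Fin n → Bool, ∑ y : Fin n → Bool, F x y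
      = ∑ p : (Fin n → Bool) × (Fin n → Bool), F p.1 p.2 := by
    rw [← Finset.sum_product']
    rfl
  rw [hsum]
  have h1 : ∑ p : (Fin n → Bool) × (Fin n → Bool), F p.1 p.2
      = ∑ p : (Fin n → Bool) × (Fin n → Bool), F (e p).1 (e p).2 :=
    (Equiv.sum_comp e (fun p => F p.1 p.2)).symm
  have h2 : ∑ p : (Fin n → Bool) × (Fin n → Bool), F (e p).1 (e p).2
      = ∑ p : (Fin n → Bool) × (Fin n → Bool), - F p.1 p.2 := by
    refine Finset.sum_congr rfl fun p _ => ?_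
    exact key p.1 p.2
  rw [h2, Finset.sum_neg_distrib] at h1
  linarith
end
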